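/- arXiv:2403.19312 — 11 statements merged into one kernel-verified Lean document; each statement's English description precedes it below -/
import Mathlib

section
/- If D is a 3-anti-traceable oriented graph and u → v → w for vertices u, v, w of D, then u → w (i.e., D is transitive). -/
variable {V : Type*}

/-- An oriented graph: no 2-cycles (and hence no loops). -/
def Oriented (A : V → V → Prop) : Prop := ∀ u v, A u v → ¬ A v u

/-- `AltPath A b l` : the consecutive vertices of `l` are joined by arcs whose
directions alternate, the first arc being forward iff `b = true`. -/
def AltPath (A : V → V → Prop) : Bool → List V → Prop
  | _, [] => True
  | _, [_] => True
  | b, x :: y :: rest => (if b then A x y else A y x) ∧ AltPath A (!b) (y :: rest)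

/-- An anti-directed path: distinct vertices with alternating arcs. -/
def IsAntiPath (A : V → V → Prop) (l : List V) : Prop :=
  l.Nodup ∧ ∃ b : Bool, AltPath A b l

/-- The induced subdigraph on the vertex set `S` has a hamiltonian anti-directed path. -/
def AntiTraceableOn [DecidableEq V] (A : V → V → Prop) (S : Finset V) : Prop :=
  ∃ l : List V, l.Nodup ∧ l.toFinset = S ∧ ∃ b : Bool, AltPath A b l

/-- The digraph has a hamiltonian anti-directed path. -/
def AntiTraceable [Fintype V] [DecidableEq V] (A : V → V → Prop) : Prop :=
  AntiTraceableOn A Finset.univ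

/-- `k`-anti-traceable: order at least `k` and every induced subdigraph on `k`
vertices has a hamiltonian anti-directed path. -/
def KAntiTraceable [Fintype V] [DecidableEq V] (k : ℕ) (A : V → V → Prop) : Prop :=
  k ≤ Fintype.card V ∧ ∀ S : Finset V, S.card = k → AntiTraceableOn A S

/-- An anti-directed cycle: a cyclic sequence of distinct vertices, of even
length at least 4, in which even-indexed vertices are sources and odd-indexed
vertices are sinks of the two incident arcs. -/
def AltCycle (A : V → V → Prop) (l : List V) : Prop :=
  l.Nodup ∧ 4 ≤ l.length ∧ l.length % 2 = 0 ∧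
  ∀ i : Fin l.length,
    if i.1 % 2 = 0 then
      A (l.get i) (l.get ⟨(i.1 + 1) % l.length, Nat.mod_lt _ (Nat.zero_lt_of_lt i.2)⟩)
    else
      A (l.get ⟨(i.1 + 1) % l.length, Nat.mod_lt _ (Nat.zero_lt_of_lt i.2)⟩) (l.get i)

/-- The arcs among `{a,b,c}` form a subset of the arcs of a directed triangle. -/
def SubDirTriangle (A : V → V → Prop) (a b c : V) : Prop :=
  (¬ A b a ∧ ¬ A c b ∧ ¬ A a c) ∨ (¬ A a b ∧ ¬ A b c ∧ ¬ A c a)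

theorem stmt0 [Fintype V] [DecidableEq V] (A : V → V → Prop)
    (hA : Oriented A) (h3 : KAntiTraceable 3 A)
    (u v w : V) (huv : A u v) (hvw : A v w) : A u w := by
  have huv' : u ≠ v := fun h => hA u v huv (h ▸ huv)
  have hvw' : v ≠ w := fun h => hA v w hvw (h ▸ hvw)
  have huw' : u ≠ w := fun h => hA u v huv (h ▸ hvw)
  have hcard : ({u, v, w} : Finset V).card = 3 := by
    rw [Finset.card_insert_of_notMem (by simp [huv', huw']),
        Finset.card_insert_of_notMem (by simp [hvw'])]
    simp
  obtain ⟨l, hnd, hS, b, hp⟩ := h3.2 {u, v, w} hcard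
  have hlen : l.length = 3 := by
    rw [← List.toFinset_card_of_nodup hnd, hS, hcard]
  match l, hlen with
  | [x, y, z], _ =>
    have hx : x = u ∨ x = v ∨ x = w := by
      have : x ∈ ({u, v, w} : Finset V) := hS ▸ (by simp)
      simpa using this
    have hy : y = u ∨ y = v ∨ y = w := by
      have : y ∈ ({u, v, w} : Finset V) := hS ▸ (by simp)
      simpa using this
    have hz : z = u ∨ z = v ∨ z = w := by
      have : z ∈ ({u, v, w} : Finset V) := hS ▸ (by simp)
      simpa using this
    simp only [List.nodup_cons, List.mem_cons] at hnd
    cases b <;> simp only [AltPath, if_true, if_false, and_true] at hp <;>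
      rcases hx with rfl | rfl | rfl <;> rcases hy with rfl | rfl | rfl <;>
      rcases hz with rfl | rfl | rfl <;> simp_all <;>
      first
        | assumption
        | exact absurd hp.1 (hA _ _ (by assumption))
        | exact absurd hp.2 (hA _ _ (by assumption))
        | exact absurd hp (hA _ _ (by assumption))
end

section
/- An oriented graph D is 3-anti-traceable if and only if D is an extended transitive tournament T[I_1, I_2, ..., I_t] for some positive integer t, where each I_i is an independent set of size at most two. (Here T is a transitive tournament on t vertices and T[I_1,...,I_t] denotes the composition obtained by replacing vertex i of T by the independent set I_i, with all arcs from I_i to I_j whenever i → j in T.) -/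
variable {V : Type*}

section Aux
variable [DecidableEq V] {A : V → V → Prop}

lemma stmt2_mid (h3 : ∀ S : Finset V, S.card = 3 → AntiTraceableOn A S)
    {a b c : V} (hab : a ≠ b) (hac : a ≠ c) (hbc : b ≠ c) :
    ∃ m, (a = m ∨ b = m ∨ c = m) ∧
      ((∀ w, (w = a ∨ w = b ∨ w = c) → w ≠ m → A m w) ∨
       (∀ w, (w = a ∨ w = b ∨ w = c) → w ≠ m → A w m)) := by
  have hcard : ({a, b, c} : Finset V).card = 3 := by
    rw [Finset.card_eq_three]; exact ⟨a, b, c, hab, hac, hbc, rfl⟩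
  obtain ⟨l, hnd, hl, bb, hp⟩ := h3 {a, b, c} hcard
  have hlen : l.length = 3 := by
    rw [← List.toFinset_card_of_nodup hnd, hl, hcard]
  obtain ⟨x, y, z, rfl⟩ : ∃ x y z, l = [x, y, z] := by
    rcases l with _ | ⟨x, _ | ⟨y, _ | ⟨z, _ | ⟨w, l⟩⟩⟩⟩ <;>
      first | exact ⟨_, _, _, rfl⟩ | simp at hlen
  have hy : y = a ∨ y = b ∨ y = c := by
    have : y ∈ ({a, b, c} : Finset V) := by rw [← hl]; simp
    simpa using this
  have hw' : ∀ w, (w = a ∨ w = b ∨ w = c) → (w = x ∨ w = y ∨ w = z) := by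
    intro w h
    have : w ∈ ([x, y, z] : List V).toFinset := by rw [hl]; simp [h]
    simpa using this
  refine ⟨y, by tauto, ?_⟩
  cases bb
  · left
    intro w hwabc hwy
    rcases hw' w hwabc with rfl | rfl | rfl
    · exact hp.1
    · exact absurd rfl hwy
    · exact hp.2.1
  · right
    intro w hwabc hwy
    rcases hw' w hwabc with rfl | rfl | rfl
    · exact hp.1
    · exact absurd rfl hwy
    · exact hp.2.1

lemma stmt2_trans (hA : Oriented A) (h3 : ∀ S : Finset V, S.card = 3 → AntiTraceableOn A S)
    {a b c : V} (h1 : A a b) (h2 : A b c) : A a c := by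
  have hab : a ≠ b := by rintro rfl; exact hA a a h1 h1
  have hbc : b ≠ c := by rintro rfl; exact hA b b h2 h2
  by_cases hac : a = c
  · subst hac; exact absurd h2 (hA a b h1)
  obtain ⟨m, hm, hs | hs⟩ := stmt2_mid h3 hab hac hbc
  · rcases hm with rfl | rfl | rfl
    · exact hs c (by tauto) (Ne.symm hac)
    · exact absurd (hs a (by tauto) hab) (hA a b h1)
    · exact absurd (hs b (by tauto) hbc) (hA b c h2)
  · rcases hm with rfl | rfl | rfl
    · exact absurd (hs b (by tauto) (Ne.symm hab)) (hA a b h1)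
    · exact absurd (hs c (by tauto) (Ne.symm hbc)) (hA b c h2)
    · exact hs a (by tauto) hac

lemma stmt2_no_two_nonadj (h3 : ∀ S : Finset V, S.card = 3 → AntiTraceableOn A S)
    {a b c : V} (hab : a ≠ b) (hac : a ≠ c) (hbc : b ≠ c)
    (n1 : ¬ A a b) (n2 : ¬ A b a) (n3 : ¬ A b c) (n4 : ¬ A c b) : False := by
  obtain ⟨m, hm, hs | hs⟩ := stmt2_mid h3 hab hac hbc
  · rcases hm with rfl | rfl | rfl
    · exact n1 (hs b (by tauto) (Ne.symm hab))
    · exact n2 (hs a (by tauto) hab)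
    · exact n4 (hs b (by tauto) hbc)
  · rcases hm with rfl | rfl | rfl
    · exact n2 (hs b (by tauto) (Ne.symm hab))
    · exact n1 (hs a (by tauto) hab)
    · exact n3 (hs b (by tauto) hbc)

lemma stmt2_nonadj_out (hA : Oriented A) (h3 : ∀ S : Finset V, S.card = 3 → AntiTraceableOn A S)
    {a b c : V} (hab : a ≠ b) (n1 : ¬ A a b) (n2 : ¬ A b a) (h : A a c) : A b c := by
  have hac : a ≠ c := by rintro rfl; exact hA a a h h
  have hbc : b ≠ c := by rintro rfl; exact n1 h
  obtain ⟨m, hm, hs | hs⟩ := stmt2_mid h3 hab hac hbc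
  · rcases hm with rfl | rfl | rfl
    · exact absurd (hs b (by tauto) (Ne.symm hab)) n1
    · exact absurd (hs a (by tauto) hab) n2
    · exact absurd (hs a (by tauto) hac) (hA a c h)
  · rcases hm with rfl | rfl | rfl
    · exact absurd (hs b (by tauto) (Ne.symm hab)) n2
    · exact absurd (hs a (by tauto) hab) n1
    · exact hs b (by tauto) hbc

lemma stmt2_nonadj_in (hA : Oriented A) (h3 : ∀ S : Finset V, S.card = 3 → AntiTraceableOn A S)
    {a b c : V} (hab : a ≠ b) (n1 : ¬ A a b) (n2 : ¬ A b a) (h : A c a) : A c b := by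
  have hac : a ≠ c := by rintro rfl; exact hA a a h h
  have hbc : b ≠ c := by rintro rfl; exact n2 h
  obtain ⟨m, hm, hs | hs⟩ := stmt2_mid h3 hab hac hbc
  · rcases hm with rfl | rfl | rfl
    · exact absurd (hs b (by tauto) (Ne.symm hab)) n1
    · exact absurd (hs a (by tauto) hab) n2
    · exact hs b (by tauto) hbc
  · rcases hm with rfl | rfl | rfl
    · exact absurd (hs b (by tauto) (Ne.symm hab)) n2
    · exact absurd (hs a (by tauto) hab) n1
    · exact absurd (hs a (by tauto) hac) (hA c a h)

end Aux

theorem stmt2 [Fintype V] [DecidableEq V] (A : V → V → Prop)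
    (hA : Oriented A) (hcard : 3 ≤ Fintype.card V) :
    KAntiTraceable 3 A ↔
      ∃ t : ℕ, 0 < t ∧ ∃ f : V → Fin t,
        (∀ u v : V, A u v ↔ f u < f v) ∧
        (∀ i : Fin t, 1 ≤ (Finset.univ.filter (fun v => f v = i)).card ∧
          (Finset.univ.filter (fun v => f v = i)).card ≤ 2) := by
  classical
  constructor
  · rintro ⟨-, h3⟩
    set g : V → ℕ := fun v => (Finset.univ.filter (fun u => A u v)).card with hg
    have hmono : ∀ u v, A u v → g u < g v := by
      intro u v huv
      apply Finset.card_lt_card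
      rw [Finset.ssubset_iff_of_subset]
      · exact ⟨u, by simp [huv], by simp; exact fun h => hA u u h h⟩
      · intro w hw
        simp only [Finset.mem_filter, Finset.mem_univ, true_and] at hw ⊢
        exact stmt2_trans hA h3 hw huv
    have hsame : ∀ u v, u ≠ v → ¬ A u v → ¬ A v u → g u = g v := by
      intro u v huv n1 n2
      have : (Finset.univ.filter (fun w => A w u)) = (Finset.univ.filter (fun w => A w v)) := by
        ext w
        simp only [Finset.mem_filter, Finset.mem_univ, true_and]
        constructor
        · exact fun h => stmt2_nonadj_in hA h3 huv n1 n2 h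
        · exact fun h => stmt2_nonadj_in hA h3 (Ne.symm huv) n2 n1 h
      simp only [hg, this]
    have hiff : ∀ u v, A u v ↔ g u < g v := by
      intro u v
      refine ⟨hmono u v, fun h => ?_⟩
      by_contra hn
      rcases eq_or_ne u v with rfl | hne
      · exact lt_irrefl _ h
      by_cases h2 : A v u
      · exact absurd h (not_lt.mpr (hmono v u h2).le)
      · exact absurd h (by rw [hsame u v hne hn h2]; exact lt_irrefl _)
    have hV : Nonempty V := Fintype.card_pos_iff.mp (by omega)
    obtain ⟨v0⟩ := hV
    set s : Finset ℕ := Finset.univ.image g with hs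
    have hsne : s.Nonempty := ⟨g v0, Finset.mem_image_of_mem g (Finset.mem_univ v0)⟩
    refine ⟨s.card, Finset.card_pos.mpr hsne, ?_⟩
    set e := s.orderIsoOfFin rfl with he
    have hmem : ∀ v, g v ∈ s := fun v => Finset.mem_image_of_mem g (Finset.mem_univ v)
    set f : V → Fin s.card := fun v => e.symm ⟨g v, hmem v⟩ with hf
    have hchar : ∀ v i, f v = i ↔ g v = (e i : ℕ) := by
      intro v i
      show e.symm ⟨g v, hmem v⟩ = i ↔ _
      constructor
      · intro h
        have : (⟨g v, hmem v⟩ : {x // x ∈ s}) = e i := by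
          rw [← h]; simp
        exact congrArg Subtype.val this
      · intro h
        have h2 : (⟨g v, hmem v⟩ : {x // x ∈ s}) = e i := Subtype.ext h
        rw [h2]; simp
    refine ⟨f, ?_, ?_⟩
    · intro u v
      rw [hiff u v, hf]
      constructor
      · intro h
        exact e.symm.lt_iff_lt.mpr (Subtype.mk_lt_mk.mpr h)
      · intro h
        exact Subtype.mk_lt_mk.mp (e.symm.lt_iff_lt.mp h)
    · intro i
      constructor
      · have hmem2 : (e i : ℕ) ∈ s := (e i).2
        obtain ⟨v, -, hv⟩ := Finset.mem_image.mp hmem2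
        exact Finset.card_pos.mpr ⟨v, Finset.mem_filter.mpr ⟨Finset.mem_univ v, (hchar v i).mpr hv⟩⟩
      · by_contra hgt
        push_neg at hgt
        obtain ⟨x, y, z, hx, hy, hz, hxy, hxz, hyz⟩ := Finset.two_lt_card_iff.mp hgt
        have hgx : g x = (e i : ℕ) := (hchar x i).mp (Finset.mem_filter.mp hx).2
        have hgy : g y = (e i : ℕ) := (hchar y i).mp (Finset.mem_filter.mp hy).2
        have hgz : g z = (e i : ℕ) := (hchar z i).mp (Finset.mem_filter.mp hz).2
        have nonadj : ∀ u v : V, g u = g v → ¬ A u v := by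
          intro u v h hA'
          exact absurd (hmono u v hA') (by omega)
        exact stmt2_no_two_nonadj h3 hxy hxz hyz
          (nonadj x y (by omega)) (nonadj y x (by omega))
          (nonadj y z (by omega)) (nonadj z y (by omega))
  · rintro ⟨t, ht, f, hfA, hfib⟩
    refine ⟨hcard, fun S hS3 => ?_⟩
    obtain ⟨a, b, c, hab, hac, hbc, rfl⟩ := Finset.card_eq_three.mp hS3
    have key : ∀ x m y : V, x ≠ m → x ≠ y → m ≠ y → ({x, m, y} : Finset V) = {a, b, c} →
        ((f m < f x ∧ f m < f y) ∨ (f x < f m ∧ f y < f m)) →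
        AntiTraceableOn A ({a, b, c} : Finset V) := by
      intro x m y h1 h2 h3 hS hlt
      refine ⟨[x, m, y], by simp [h1, h2, h3], by simpa using hS, ?_⟩
      rcases hlt with ⟨u1, u2⟩ | ⟨u1, u2⟩
      · exact ⟨false, (hfA m x).mpr u1, (hfA m y).mpr u2, trivial⟩
      · exact ⟨true, (hfA x m).mpr u1, (hfA y m).mpr u2, trivial⟩
    have hne3 : ¬ (f a = f b ∧ f a = f c) := by
      rintro ⟨e1, e2⟩
      have hsub : ({a, b, c} : Finset V) ⊆ Finset.univ.filter (fun v => f v = f a) := by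
        intro w hw
        simp only [Finset.mem_insert, Finset.mem_singleton] at hw
        rcases hw with rfl | rfl | rfl <;> simp [e1.symm, e2.symm]
      have := (hfib (f a)).2
      have := Finset.card_le_card hsub
      rw [hS3] at this
      omega
    rcases lt_trichotomy (f a) (f b) with h1 | h1 | h1
    · rcases lt_trichotomy (f a) (f c) with h2 | h2 | h2
      · exact key b a c (Ne.symm hab) hbc hac (by ext w; simp; tauto) (Or.inl ⟨h1, h2⟩)
      · exact key a b c hab hac hbc rfl (Or.inr ⟨h1, by rw [← h2]; exact h1⟩)
      · exact key a c b hac hab (Ne.symm hbc) (by ext w; simp; tauto)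
          (Or.inl ⟨h2, h2.trans h1⟩)
    · rcases lt_trichotomy (f a) (f c) with h2 | h2 | h2
      · exact key a c b hac hab (Ne.symm hbc) (by ext w; simp; tauto)
          (Or.inr ⟨h2, by rw [← h1]; exact h2⟩)
      · exact absurd ⟨h1, h2⟩ hne3
      · exact key a c b hac hab (Ne.symm hbc) (by ext w; simp; tauto)
          (Or.inl ⟨h2, by rw [← h1]; exact h2⟩)
    · rcases lt_trichotomy (f b) (f c) with h2 | h2 | h2
      · exact key a b c hab hac hbc rfl (Or.inl ⟨h1, h2⟩)
      · exact key b a c (Ne.symm hab) hbc hac (by ext w; simp; tauto)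
          (Or.inr ⟨h1, by rw [← h2]; exact h1⟩)
      · exact key a c b hac hab (Ne.symm hbc) (by ext w; simp; tauto)
          (Or.inl ⟨h2.trans h1, h2⟩)
end

section
/- Every 3-anti-traceable oriented graph on 4 vertices is anti-traceable. -/
variable {V : Type*}

/- ### Auxiliary machinery for the finite check -/

/-- Decode six `Fin 3` codes (one per unordered pair: 0 = no arc, 1 = forward,
2 = backward) into a boolean adjacency on `Fin 4`. -/
def mkB (c01 c02 c03 c12 c13 c23 : Fin 3) (i j : Fin 4) : Bool :=
  match i.val, j.val with
  | 0, 1 => c01 == 1 | 1, 0 => c01 == 2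
  | 0, 2 => c02 == 1 | 2, 0 => c02 == 2
  | 0, 3 => c03 == 1 | 3, 0 => c03 == 2
  | 1, 2 => c12 == 1 | 2, 1 => c12 == 2
  | 1, 3 => c13 == 1 | 3, 1 => c13 == 2
  | 2, 3 => c23 == 1 | 3, 2 => c23 == 2
  | _, _ => false

/-- Every 3-element induced subdigraph has a hamiltonian antipath (boolean form). -/
def Hyp3 (B : Fin 4 → Fin 4 → Bool) : Prop :=
  ∀ i j k : Fin 4, i ≠ j → i ≠ k → j ≠ k →
    ((B j i ∧ B k i) ∨ (B i j ∧ B i k)) ∨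
    ((B i j ∧ B k j) ∨ (B j i ∧ B j k)) ∨
    ((B i k ∧ B j k) ∨ (B k i ∧ B k j))

/-- There is a hamiltonian antipath on all four vertices (boolean form). -/
def Concl4 (B : Fin 4 → Fin 4 → Bool) : Prop :=
  ∃ p q r s : Fin 4, [p,q,r,s].Nodup ∧
    ((B p q ∧ B r q ∧ B r s) ∨ (B q p ∧ B q r ∧ B s r))

instance : DecidablePred Hyp3 := fun B => by unfold Hyp3; infer_instance
instance : DecidablePred Concl4 := fun B => by unfold Concl4; infer_instance

set_option maxHeartbeats 4000000 in
/-- The finite verification over all `3^6` oriented graphs on four vertices. -/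
lemma key : ∀ c01 c02 c03 c12 c13 c23 : Fin 3,
    Hyp3 (mkB c01 c02 c03 c12 c13 c23) → Concl4 (mkB c01 c02 c03 c12 c13 c23) := by
  decide

open scoped Classical in
/-- The code of a pair of vertices. -/
noncomputable def code (A : V → V → Prop) (a b : V) : Fin 3 :=
  if A a b then 1 else if A b a then 2 else 0

lemma code_one {A : V → V → Prop} (a b : V) : (code A a b == 1) = true ↔ A a b := by
  unfold code
  split_ifs with h h'
  · simp [h]
  · simp [h]
  · simp [h]

lemma code_two {A : V → V → Prop} (hA : Oriented A) (a b : V) :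
    (code A a b == 2) = true ↔ A b a := by
  unfold code
  split_ifs with h h'
  · simp [hA a b h]
  · simp [h']
  · simp [h']

lemma mkB_iff (A : V → V → Prop) (hA : Oriented A) (e : Fin 4 ≃ V) (i j : Fin 4) :
    mkB (code A (e 0) (e 1)) (code A (e 0) (e 2)) (code A (e 0) (e 3))
        (code A (e 1) (e 2)) (code A (e 1) (e 3)) (code A (e 2) (e 3)) i j = true
      ↔ A (e i) (e j) := by
  fin_cases i <;> fin_cases j <;>
    simp only [mkB,
      show (⟨0, by omega⟩ : Fin 4) = 0 from rfl, show (⟨1, by omega⟩ : Fin 4) = 1 from rfl,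
      show (⟨2, by omega⟩ : Fin 4) = 2 from rfl, show (⟨3, by omega⟩ : Fin 4) = 3 from rfl] <;>
    first
      | exact code_one _ _
      | exact code_two hA _ _
      | (simp; exact fun h => hA _ _ h h)

theorem stmt3 [Fintype V] [DecidableEq V] (A : V → V → Prop)
    (hA : Oriented A) (hcard : Fintype.card V = 4)
    (h3 : KAntiTraceable 3 A) : AntiTraceable A := by
  classical
  have e : Fin 4 ≃ V := (Fintype.equivFinOfCardEq hcard).symm
  have hpt := mkB_iff A hA e
  have hhyp : Hyp3 (mkB (code A (e 0) (e 1)) (code A (e 0) (e 2)) (code A (e 0) (e 3))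
      (code A (e 1) (e 2)) (code A (e 1) (e 3)) (code A (e 2) (e 3))) := by
    intro i j k hij hik hjk
    have hScard : ({e i, e j, e k} : Finset V).card = 3 := by
      rw [Finset.card_insert_of_notMem (by simp [e.injective.eq_iff, hij, hik]),
        Finset.card_insert_of_notMem (by simp [e.injective.eq_iff, hjk]),
        Finset.card_singleton]
    obtain ⟨l, hnd, hset, bb, halt⟩ := h3.2 _ hScard
    have hlen : l.length = 3 := by
      have h := List.toFinset_card_of_nodup hnd
      rw [hset, hScard] at h
      omega
    rcases l with _ | ⟨x, _ | ⟨y, _ | ⟨z, _ | ⟨w, t⟩⟩⟩⟩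
    · simp at hlen
    · simp at hlen
    · simp at hlen
    case cons.cons.cons.cons => simp at hlen
    have hcen : (A x y ∧ A z y) ∨ (A y x ∧ A y z) := by
      cases bb <;> simp [AltPath] at halt <;> tauto
    have hmi : e i = x ∨ e i = y ∨ e i = z := by
      have : e i ∈ [x, y, z].toFinset := by rw [hset]; simp
      simpa using this
    have hmj : e j = x ∨ e j = y ∨ e j = z := by
      have : e j ∈ [x, y, z].toFinset := by rw [hset]; simp
      simpa using this
    have hmk : e k = x ∨ e k = y ∨ e k = z := by
      have : e k ∈ [x, y, z].toFinset := by rw [hset]; simp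
      simpa using this
    simp only [hpt]
    rcases hmi with hi | hi | hi <;> rcases hmj with hj | hj | hj <;>
      rcases hmk with hk | hk | hk <;>
      first
        | exact absurd (e.injective (hi.trans hj.symm)) hij
        | exact absurd (e.injective (hi.trans hk.symm)) hik
        | exact absurd (e.injective (hj.trans hk.symm)) hjk
        | (rw [hi, hj, hk]; tauto)
  obtain ⟨p, q, r, s, hnd4, harcs⟩ := key _ _ _ _ _ _ hhyp
  simp only [hpt] at harcs
  have hne : (p ≠ q ∧ p ≠ r ∧ p ≠ s) ∧ (q ≠ r ∧ q ≠ s) ∧ r ≠ s := by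
    simpa using hnd4
  refine ⟨[e p, e q, e r, e s], ?_, ?_, ?_⟩
  · simp [e.injective.eq_iff, hne.1.1, hne.1.2.1, hne.1.2.2, hne.2.1.1, hne.2.1.2, hne.2.2]
  · apply Finset.eq_univ_of_card
    rw [hcard]
    have : [e p, e q, e r, e s].toFinset = {e p, e q, e r, e s} := by simp
    rw [this,
      Finset.card_insert_of_notMem (by
        simp [e.injective.eq_iff, hne.1.1, hne.1.2.1, hne.1.2.2]),
      Finset.card_insert_of_notMem (by
        simp [e.injective.eq_iff, hne.2.1.1, hne.2.1.2]),
      Finset.card_insert_of_notMem (by simp [e.injective.eq_iff, hne.2.2]),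
      Finset.card_singleton]
  · rcases harcs with ⟨h1, h2, h3'⟩ | ⟨h1, h2, h3'⟩
    · exact ⟨true, by simp [AltPath]; tauto⟩
    · exact ⟨false, by simp [AltPath]; tauto⟩
end

section
/- If D is a 3-anti-traceable oriented graph with |V(D)| ≥ 5 and |V(D)| even, then D has a hamiltonian anti-directed cycle. -/
variable {V : Type*}

/-!
In a 3-anti-traceable digraph no three vertices span a subdigraph of a directed triangle.
For an oriented graph this makes `¬ A v u` a total preorder, and listing the vertices as
`v₀, …, v₂ₘ₋₁` along it yields an arc `vᵢ → vⱼ` whenever `i + 2 ≤ j`. For `m ≥ 3` the sequence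
`v₀, vₘ, v₁, vₘ₊₁, …, vₘ₋₁, v₂ₘ₋₁` is then a hamiltonian anti-directed cycle: its arcs are
`vᵢ → vₘ₊ᵢ`, `vᵢ₊₁ → vₘ₊ᵢ` and `v₀ → v₂ₘ₋₁`.
-/

section

variable {A : V → V → Prop}

theorem KAntiTraceable.not_subDirTriangle [Fintype V] [DecidableEq V]
    (h3 : KAntiTraceable 3 A) {a b c : V} (hab : a ≠ b) (hac : a ≠ c) (hbc : b ≠ c) :
    ¬ SubDirTriangle A a b c := by
  intro htri
  have hcard : ({a, b, c} : Finset V).card = 3 :=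
    Finset.card_eq_three.mpr ⟨a, b, c, hab, hac, hbc, rfl⟩
  obtain ⟨l, hnd, hl, e, hpath⟩ := h3.2 _ hcard
  have hlen : l.length = 3 := by
    rw [← List.toFinset_card_of_nodup hnd, hl, hcard]
  obtain ⟨x, y, z, rfl⟩ : ∃ x y z, l = [x, y, z] := by
    match l, hlen with
    | [x, y, z], _ => exact ⟨x, y, z, rfl⟩
  have hmem : ∀ t ∈ [x, y, z], t = a ∨ t = b ∨ t = c := fun t ht => by
    have ht' := List.mem_toFinset.mpr ht
    rw [hl] at ht'
    simpa using ht'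
  -- The middle vertex `y` of the anti-directed path has two in-arcs or two out-arcs,
  -- which a subdigraph of a directed triangle never has.
  have hwedge : (A x y ∧ A z y) ∨ (A y x ∧ A y z) := by
    cases e <;> simp_all [AltPath]
  simp only [List.nodup_cons, List.mem_cons, List.not_mem_nil] at hnd
  rcases hmem x (by simp) with rfl | rfl | rfl <;> rcases hmem y (by simp) with rfl | rfl | rfl <;>
    rcases hmem z (by simp) with rfl | rfl | rfl <;> unfold SubDirTriangle at htri <;> tauto

theorem KAntiTraceable.arc_of_not_arc_of_not_arc [Fintype V] [DecidableEq V]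
    (h3 : KAntiTraceable 3 A) {u v w : V} (huv : u ≠ v) (huw : u ≠ w) (hvw : v ≠ w)
    (hvu : ¬ A v u) (hwv : ¬ A w v) : A u w :=
  by_contra fun huw' => h3.not_subDirTriangle huv huw hvw (Or.inl ⟨hvu, hwv, huw'⟩)

theorem KAntiTraceable.not_arc_trans [Fintype V] [DecidableEq V] (hA : Oriented A)
    (h3 : KAntiTraceable 3 A) {u v w : V} (hvu : ¬ A v u) (hwv : ¬ A w v) : ¬ A w u := by
  rcases eq_or_ne u v with rfl | huv
  · exact hwv
  rcases eq_or_ne v w with rfl | hvw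
  · exact hvu
  rcases eq_or_ne u w with rfl | huw
  · exact fun h => hA _ _ h h
  exact hA _ _ (h3.arc_of_not_arc_of_not_arc huv huw hvw hvu hwv)

theorem KAntiTraceable.arc_getElem [Fintype V] [DecidableEq V] (h3 : KAntiTraceable 3 A)
    {s : List V} (hnd : s.Nodup) (hs : s.Pairwise fun a b => ¬ A b a)
    {i j : ℕ} (hj : j < s.length) (hij : i + 2 ≤ j) :
    A (s[i]'(by omega)) s[j] := by
  have hp := List.pairwise_iff_getElem.mp hs
  refine h3.arc_of_not_arc_of_not_arc (v := s[i + 1]) ?_ ?_ ?_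
    (hp _ _ _ _ (by omega)) (hp _ _ _ _ (by omega)) <;>
    simp only [ne_eq, hnd.getElem_inj_iff] <;> omega

end

theorem exists_nodup_pairwise_of_total_of_trans [Fintype V] (r : V → V → Prop)
    (htotal : ∀ a b, r a b ∨ r b a) (htrans : ∀ a b c, r a b → r b c → r a c) :
    ∃ s : List V, s.Nodup ∧ s.length = Fintype.card V ∧ s.Pairwise r := by
  classical
  have hperm := List.mergeSort_perm (Finset.univ : Finset V).toList (fun a b => decide (r a b))
  refine ⟨_, hperm.nodup_iff.mpr (Finset.nodup_toList _), by simp, ?_⟩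
  refine (List.pairwise_mergeSort ?_ ?_ _).imp (fun h => of_decide_eq_true h)
  · simpa using htrans
  · simpa using htotal

def interleave (m : ℕ) (k : Fin (m + m)) : Fin (m + m) :=
  ⟨if k.1 % 2 = 0 then k.1 / 2 else m + k.1 / 2, by split <;> omega⟩

theorem interleave_injective (m : ℕ) : Function.Injective (interleave m) := by
  intro k k' h
  simp only [interleave, Fin.ext_iff] at h
  ext
  split at h <;> split at h <;> omega

theorem altCycle_ofFn_interleave {A : V → V → Prop} {m : ℕ} (hm : 3 ≤ m) {g : Fin (m + m) → V}
    (hg : Function.Injective g) (hspread : ∀ i j : Fin (m + m), i.1 + 2 ≤ j.1 → A (g i) (g j)) :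
    AltCycle A (List.ofFn (g ∘ interleave m)) := by
  refine ⟨List.nodup_ofFn.mpr (hg.comp (interleave_injective m)),
    by simp only [List.length_ofFn]; omega, by simp only [List.length_ofFn]; omega, ?_⟩
  rintro ⟨k, hk⟩
  simp only [List.length_ofFn] at hk
  have hnext : (k + 1) % (m + m) = if k + 1 < m + m then k + 1 else 0 := by
    split
    · exact Nat.mod_eq_of_lt ‹_›
    · rw [show k + 1 = m + m by omega, Nat.mod_self]
  simp only [List.get_eq_getElem, List.getElem_ofFn, Function.comp, List.length_ofFn]
  split <;> apply hspread <;> simp only [interleave, hnext] <;> split_ifs <;> omega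

theorem stmt4 [Fintype V] [DecidableEq V] (A : V → V → Prop)
    (hA : Oriented A) (h3 : KAntiTraceable 3 A)
    (hcard : 5 ≤ Fintype.card V) (heven : Even (Fintype.card V)) :
    ∃ l : List V, AltCycle A l ∧ l.toFinset = Finset.univ := by
  obtain ⟨m, hm⟩ := heven
  obtain ⟨s, hnd, hlen, hsorted⟩ := exists_nodup_pairwise_of_total_of_trans
    (fun u v => ¬ A v u) (fun u v => not_or_of_imp (hA v u))
    (fun _ _ _ => h3.not_arc_trans hA)
  rw [hm] at hlen
  have hcycle := altCycle_ofFn_interleave (A := A) (by omega : 3 ≤ m)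
    (g := fun i => s[i.1]) (fun i j h => Fin.ext ((hnd.getElem_inj_iff).mp h))
    (fun i j hij => h3.arc_getElem hnd hsorted (by omega) hij)
  refine ⟨_, hcycle, Finset.eq_univ_of_card _ ?_⟩
  rw [List.toFinset_card_of_nodup hcycle.1, List.length_ofFn, hm]
end

section
/- If D is a 3-anti-traceable oriented graph with |V(D)| ≥ 5 and |V(D)| odd, then D has an anti-directed cycle of length |V(D)| − 1 and a hamiltonian anti-directed path. -/
variable {V : Type*}

/-!
Three-anti-traceability says that in every triple some vertex is the tail of both arcs to the
other two, or the head of both. In an oriented graph this makes "there is no arc `v → u`" a total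
preorder, so the vertices can be listed `v₀, …, v_{n-1}` with no backward arc; the triple
`vᵢ, vᵢ₊₁, vⱼ` then forces the arc `vᵢ → vⱼ` whenever `j ≥ i + 2`. For `n = 2k + 1` with `k ≥ 2`
the zigzag `v₀ v_{k+1} v₁ v_{k+2} … v_{k-1} v_{2k} v_k` only uses pairs at distance `k` or `k + 1`,
so it is a hamiltonian anti-directed path, and dropping `v_k` closes it into an anti-directed
cycle through the arc `v₀ → v_{2k}`.
-/

theorem altPath_of_forall_getElem (A : V → V → Prop) : ∀ (l : List V) (b : Bool),
    (∀ i (hi : i + 1 < l.length),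
      if (i % 2 == 0) = b then A l[i] l[i + 1] else A l[i + 1] l[i]) →
    AltPath A b l
  | [], _, _ => trivial
  | [_], _, _ => trivial
  | x :: y :: rest, b, h => by
    refine ⟨by simpa using h 0 (by simp), altPath_of_forall_getElem A (y :: rest) (!b) ?_⟩
    intro i hi
    have := h (i + 1) (by simpa using hi)
    rcases Nat.mod_two_eq_zero_or_one i with h2 | h2 <;> cases b <;>
      simpa [Nat.add_mod, h2] using this

theorem exists_equiv_fin_of_total_of_trans [Fintype V] {r : V → V → Prop}
    (htot : ∀ a b, r a b ∨ r b a) (htrans : ∀ a b c, r a b → r b c → r a c)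
    {n : ℕ} (hn : Fintype.card V = n) :
    ∃ e : Fin n ≃ V, ∀ i j, i < j → r (e i) (e j) := by
  classical
  set l := Finset.univ.toList.mergeSort (fun a b => decide (r a b))
  have hperm : l.Perm Finset.univ.toList := List.mergeSort_perm _ _
  have hsorted : l.Pairwise r := by
    simpa using List.pairwise_mergeSort (le := fun a b => decide (r a b))
      (by simpa using htrans) (by simpa using htot) Finset.univ.toList
  have hlen : l.length = n := by
    rw [hperm.length_eq, Finset.length_toList, Finset.card_univ, hn]
  have hnodup : l.Nodup := hperm.nodup_iff.2 (Finset.nodup_toList _)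
  refine ⟨(finCongr hlen.symm).trans
    (hnodup.getEquivOfForallMemList l fun x => hperm.mem_iff.2 (by simp)), fun i j hij => ?_⟩
  exact List.pairwise_iff_get.mp hsorted _ _ hij

namespace KAntiTraceable

variable [Fintype V] [DecidableEq V] {A : V → V → Prop}

theorem source_or_sink (h3 : KAntiTraceable 3 A) {a b c : V}
    (hab : a ≠ b) (hac : a ≠ c) (hbc : b ≠ c) :
    (A a b ∧ A a c) ∨ (A b a ∧ A b c) ∨ (A c a ∧ A c b) ∨
    (A b a ∧ A c a) ∨ (A a b ∧ A c b) ∨ (A a c ∧ A b c) := by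
  have hcard : ({a, b, c} : Finset V).card = 3 := by
    rw [Finset.card_insert_of_notMem (by simp [hab, hac]),
      Finset.card_insert_of_notMem (by simp [hbc]), Finset.card_singleton]
  obtain ⟨l, hnd, hl, β, hpath⟩ := h3.2 {a, b, c} hcard
  obtain ⟨x, y, z, rfl⟩ : ∃ x y z, l = [x, y, z] := List.length_eq_three.mp <| by
    rw [← List.toFinset_card_of_nodup hnd, hl, hcard]
  have hmiddle : (A x y ∧ A z y) ∨ (A y x ∧ A y z) := by
    cases β <;> simp only [AltPath] at hpath <;> tauto
  have hmem : ∀ w ∈ [x, y, z], w = a ∨ w = b ∨ w = c := fun w hw => by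
    simpa [hl] using List.mem_toFinset.2 hw
  simp only [List.nodup_cons, List.mem_cons, List.not_mem_nil] at hnd
  obtain hx | hx | hx := hmem x (by simp) <;> obtain hy | hy | hy := hmem y (by simp) <;>
    obtain hz | hz | hz := hmem z (by simp) <;> subst hx hy hz <;> tauto

theorem not_rev_trans (hA : Oriented A) (h3 : KAntiTraceable 3 A) {a b c : V}
    (hba : ¬ A b a) (hcb : ¬ A c b) : ¬ A c a := by
  intro hca
  have hab : a ≠ b := by rintro rfl; exact hcb hca
  have hbc : b ≠ c := by rintro rfl; exact hba hca
  have hac : a ≠ c := by rintro rfl; exact hA a a hca hca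
  have hac' : ¬ A a c := hA c a hca
  have := h3.source_or_sink hab hac hbc
  tauto

theorem arc_of_not_rev (h3 : KAntiTraceable 3 A) {a b c : V}
    (hab : a ≠ b) (hac : a ≠ c) (hbc : b ≠ c)
    (hba : ¬ A b a) (hcb : ¬ A c b) : A a c := by
  have := h3.source_or_sink hab hac hbc
  tauto

theorem exists_equiv_fin_arc_of_add_two_le (hA : Oriented A) (h3 : KAntiTraceable 3 A)
    {n : ℕ} (hn : Fintype.card V = n) :
    ∃ e : Fin n ≃ V, ∀ i j : Fin n, i.1 + 2 ≤ j.1 → A (e i) (e j) := by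
  obtain ⟨e, he⟩ := exists_equiv_fin_of_total_of_trans (r := fun u v => ¬ A v u)
    (fun a b => not_and_or.mp fun h => hA a b h.2 h.1)
    (fun a b c hab hbc => h3.not_rev_trans hA hab hbc) hn
  refine ⟨e, fun i j hij => ?_⟩
  let m : Fin n := ⟨i.1 + 1, by omega⟩
  have him : i < m := Fin.lt_def.2 (by simp [m])
  have hmj : m < j := Fin.lt_def.2 (by simp [m]; omega)
  exact h3.arc_of_not_rev (e.injective.ne him.ne) (e.injective.ne (him.trans hmj).ne)
    (e.injective.ne hmj.ne) (he i m him) (he m j hmj)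

end KAntiTraceable

def zigzag (k : ℕ) (t : Fin (2 * k + 1)) : Fin (2 * k + 1) :=
  ⟨if t.1 % 2 = 0 then t.1 / 2 else k + 1 + t.1 / 2, by split <;> omega⟩

theorem zigzag_injective (k : ℕ) : Function.Injective (zigzag k) := by
  intro s t hst
  have := congrArg Fin.val hst
  simp only [zigzag] at this
  ext
  split_ifs at this <;> omega

section Zigzag

variable {A : V → V → Prop} {k : ℕ} {v : Fin (2 * k + 1) → V}

theorem altPath_zigzag (hk : 2 ≤ k) (hv : ∀ i j, i.1 + 2 ≤ j.1 → A (v i) (v j)) :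
    AltPath A true (List.ofFn (v ∘ zigzag k)) := by
  refine altPath_of_forall_getElem A _ true fun i hi => ?_
  simp only [List.length_ofFn] at hi
  simp only [List.getElem_ofFn, Function.comp_apply]
  split_ifs with hpar <;> simp only [beq_iff_eq] at hpar <;>
    exact hv _ _ (by simp only [zigzag]; split_ifs <;> omega)

theorem altCycle_zigzag (hk : 2 ≤ k) (hinj : Function.Injective v)
    (hv : ∀ i j, i.1 + 2 ≤ j.1 → A (v i) (v j)) :
    AltCycle A (List.ofFn fun t : Fin (2 * k) => v (zigzag k t.castSucc)) := by
  refine ⟨List.nodup_ofFn.2 ((hinj.comp (zigzag_injective k)).comp (Fin.castSucc_injective _)),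
    by simp; omega, by simp, fun i => ?_⟩
  obtain ⟨i, hi⟩ := i
  simp only [List.length_ofFn] at hi
  have hnext : (i + 1) % (2 * k) = if i + 1 = 2 * k then 0 else i + 1 := by
    split_ifs with h
    · rw [h, Nat.mod_self]
    · exact Nat.mod_eq_of_lt (by omega)
  simp only [List.get_eq_getElem, List.getElem_ofFn, List.length_ofFn, hnext]
  split_ifs <;> exact hv _ _ (by simp only [zigzag, Fin.val_castSucc]; split_ifs <;> omega)

end Zigzag

theorem stmt5 [Fintype V] [DecidableEq V] (A : V → V → Prop)
    (hA : Oriented A) (h3 : KAntiTraceable 3 A)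
    (hcard : 5 ≤ Fintype.card V) (hodd : Odd (Fintype.card V)) :
    (∃ l : List V, AltCycle A l ∧ l.length = Fintype.card V - 1) ∧
    AntiTraceable A := by
  obtain ⟨k, hk⟩ := hodd
  obtain ⟨e, he⟩ := h3.exists_equiv_fin_arc_of_add_two_le hA hk
  have hk2 : 2 ≤ k := by omega
  have hnodup : (List.ofFn (e ∘ zigzag k)).Nodup :=
    List.nodup_ofFn.2 (e.injective.comp (zigzag_injective k))
  refine ⟨⟨_, altCycle_zigzag hk2 e.injective he, by simp [hk]⟩,
    _, hnodup, ?_, true, altPath_zigzag hk2 he⟩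
  apply Finset.eq_univ_of_card
  rw [List.toFinset_card_of_nodup hnodup, List.length_ofFn, hk]
end

section
/- Every 3-anti-traceable oriented graph of order at least 3 is anti-traceable (i.e., f(3) = 3). -/
variable {V : Type*}

/-!
In a 3-anti-traceable oriented graph every triple has a vertex that dominates, or is dominated
by, the other two. Hence `A` is transitive, i.e. a strict partial order, and we may list the
vertices along a linear extension `v₀, …, vₙ₋₁`. Applying the triple condition to
`vᵢ, vᵢ₊₁, vⱼ` gives the arc `vᵢ → vⱼ` whenever `j ≥ i + 2`. For `n ≥ 4` and `m = ⌊n/2⌋` the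
walk `vₘ, v₀, vₘ₊₁, v₁, vₘ₊₂, …` is then a hamiltonian anti-directed path in which every `vₖ`
with `k < m` is a source (its neighbours are `vₘ₊ₖ` and `vₘ₊ₖ₊₁`, and `m ≥ 2`).
-/

variable {A : V → V → Prop}

theorem rel_of_antiTraceableOn_triple [DecidableEq V] {a b c : V}
    (hab : a ≠ b) (hac : a ≠ c) (hbc : b ≠ c) (h : AntiTraceableOn A {a, b, c})
    (hba : ¬ A b a) (hcb : ¬ A c b) : A a c := by
  obtain ⟨l, hnd, hl, b', hp⟩ := h
  have hlen : l.length = 3 := by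
    rw [← List.toFinset_card_of_nodup hnd, hl]
    exact Finset.card_eq_three.2 ⟨a, b, c, hab, hac, hbc, rfl⟩
  have hmem : ∀ v ∈ l, v = a ∨ v = b ∨ v = c := fun v hv => by
    have hv' : v ∈ l.toFinset := List.mem_toFinset.2 hv
    simpa [hl] using hv'
  match l, hlen with
  | [x, y, z], _ =>
    simp only [List.nodup_cons, List.mem_cons] at hnd
    simp only [List.mem_cons, forall_eq_or_imp] at hmem
    obtain ⟨hx, hy, hz, -⟩ := hmem
    cases b' <;> simp only [AltPath] at hp <;>
      rcases hx with rfl | rfl | rfl <;> rcases hy with rfl | rfl | rfl <;>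
      rcases hz with rfl | rfl | rfl <;> simp_all

section KAntiTraceable

variable [DecidableEq V] (h3 : ∀ S : Finset V, S.card = 3 → AntiTraceableOn A S)
include h3

theorem rel_trans_of_antiTraceableOn_card_three (hA : Oriented A) {a b c : V}
    (hab : A a b) (hbc : A b c) : A a c := by
  have hne : ∀ {u v}, A u v → u ≠ v := fun huv h => hA _ _ huv (h ▸ huv)
  have hac : a ≠ c := by
    rintro rfl
    exact hA _ _ hab hbc
  exact rel_of_antiTraceableOn_triple (hne hab) hac (hne hbc)
    (h3 _ (Finset.card_eq_three.2 ⟨a, b, c, hne hab, hac, hne hbc, rfl⟩))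
    (hA _ _ hab) (hA _ _ hbc)

theorem rel_getElem_of_add_two_le {l : List V} (hnd : l.Nodup)
    (hl : l.Pairwise fun u v => ¬ A v u) {i j : ℕ} (hij : i + 2 ≤ j) (hj : j < l.length) :
    A l[i] l[j] := by
  have hne : ∀ {p q} (hp : p < l.length) (hq : q < l.length), p < q → l[p] ≠ l[q] :=
    fun hp hq hpq h => hpq.ne ((hnd.getElem_inj_iff).1 h)
  have hlt : ∀ {p q} (hp : p < l.length) (hq : q < l.length), p < q → ¬ A l[q] l[p] :=
    fun hp hq hpq => List.pairwise_iff_getElem.1 hl _ _ hp hq hpq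
  have h01 := hne (p := i) (q := i + 1) (by omega) (by omega) (by omega)
  have h02 := hne (p := i) (q := j) (by omega) hj (by omega)
  have h12 := hne (p := i + 1) (q := j) (by omega) hj (by omega)
  exact rel_of_antiTraceableOn_triple h01 h02 h12
    (h3 _ (Finset.card_eq_three.2 ⟨_, _, _, h01, h02, h12, rfl⟩))
    (hlt _ _ (by omega)) (hlt _ hj (by omega))

end KAntiTraceable

theorem WellFounded.exists_list_pairwise_not_rel [DecidableEq V] {r : V → V → Prop}
    (hr : WellFounded r) (S : Finset V) :
    ∃ l : List V, l.Nodup ∧ l.toFinset = S ∧ l.Pairwise fun u v => ¬ r v u := by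
  induction S using Finset.strongInduction with
  | _ S ih =>
    rcases S.eq_empty_or_nonempty with rfl | hS
    · exact ⟨[], by simp⟩
    obtain ⟨u, huS, hu⟩ := hr.has_min S hS
    obtain ⟨l, hnd, hl, hpw⟩ := ih (S.erase u) (Finset.erase_ssubset huS)
    have hmem : ∀ v, v ∈ l ↔ v ∈ S.erase u := fun v => by rw [← List.mem_toFinset, hl]
    refine ⟨u :: l, List.nodup_cons.2 ⟨fun h => by simpa using (hmem u).1 h, hnd⟩, ?_,
      List.pairwise_cons.2 ⟨fun v hv => hu v (Finset.mem_of_mem_erase ((hmem v).1 hv)), hpw⟩⟩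
    rw [List.toFinset_cons, hl, Finset.insert_erase huS]

theorem altPath_interleave :
    ∀ {xs ys : List V} {b : Bool}, ys.length ≤ xs.length → xs.length ≤ ys.length + 1 →
      (∀ i (hx : i < xs.length) (hy : i < ys.length),
        if b then A xs[i] ys[i] else A ys[i] xs[i]) →
      (∀ i (hx : i + 1 < xs.length) (hy : i < ys.length),
        if b then A xs[i + 1] ys[i] else A ys[i] xs[i + 1]) →
      AltPath A b (xs.interleave ys)
  | [], _, _, hyx, _, _, _ => by simp_all [AltPath]
  | [x], [], _, _, _, _, _ => by simp [AltPath]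
  | x :: xs, y :: ys, b, hyx, hxy, h₁, h₂ => by
    rw [List.cons_interleave, List.cons_interleave]
    refine ⟨h₁ 0 (by simp) (by simp), ?_⟩
    rw [← List.cons_interleave]
    refine altPath_interleave (by simpa using hxy) (by simpa using hyx) (fun i hy hx => ?_)
      (fun i hy hx => ?_)
    · cases b <;> exact h₂ i (Nat.succ_lt_succ hx) hy
    · cases b <;> exact h₁ (i + 1) (Nat.succ_lt_succ hx) hy
termination_by xs ys => xs.length + ys.length

theorem antiTraceableOn_of_rel_getElem [DecidableEq V] {l : List V} (hnd : l.Nodup)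
    (hlen : 4 ≤ l.length)
    (hl : ∀ i j (hij : i + 2 ≤ j) (hj : j < l.length), A l[i] l[j]) :
    AntiTraceableOn A l.toFinset := by
  set m := l.length / 2
  have hperm : ((l.drop m).interleave (l.take m)).Perm l :=
    List.interleave_perm_append.trans (List.perm_append_comm.trans (by rw [List.take_append_drop]))
  refine ⟨_, hperm.nodup_iff.2 hnd, List.toFinset_eq_of_perm _ _ hperm, false,
    altPath_interleave (by simp only [List.length_drop, List.length_take]; omega)
      (by simp only [List.length_drop, List.length_take]; omega)
      (fun i hx hy => ?_) (fun i hx hy => ?_)⟩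
  · simp only [List.length_drop, List.length_take] at hx hy
    simpa using hl i (m + i) (by omega) (by omega)
  · simp only [List.length_drop, List.length_take] at hx hy
    simpa [add_assoc] using hl i (m + (i + 1)) (by omega) (by omega)

theorem stmt6_general [Fintype V] [DecidableEq V] (A : V → V → Prop)
    (hA : Oriented A)
    (h3 : KAntiTraceable 3 A) : AntiTraceable A := by
  obtain ⟨hcard, h3⟩ := h3
  rcases hcard.eq_or_lt with hn | hn
  · exact h3 _ (by rw [Finset.card_univ, hn])
  have : IsTrans V A := ⟨fun _ _ _ => rel_trans_of_antiTraceableOn_card_three h3 hA⟩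
  have : Std.Irrefl A := ⟨fun a h => hA a a h h⟩
  obtain ⟨l, hnd, hl, hpw⟩ :=
    (Finite.wellFounded_of_trans_of_irrefl A).exists_list_pairwise_not_rel Finset.univ
  have hlen : l.length = Fintype.card V := by
    rw [← List.toFinset_card_of_nodup hnd, hl, Finset.card_univ]
  rw [AntiTraceable, ← hl]
  exact antiTraceableOn_of_rel_getElem hnd (by omega)
    fun _ _ => rel_getElem_of_add_two_le h3 hnd hpw

theorem stmt6 [Fintype V] [DecidableEq V] (A : V → V → Prop)
    (hA : Oriented A) (hcard : 3 ≤ Fintype.card V)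
    (h3 : KAntiTraceable 3 A) : AntiTraceable A :=
  stmt6_general A hA h3
end

section
/- Let D be a 4-anti-traceable oriented graph and let P = v_1 v_2 ... v_s be a longest anti-directed path in D with s < |V(D)|. If w is a vertex not on P and w is adjacent to v_1, then the induced subdigraph D[{v_1, v_2, w}] is a subdigraph of a directed triangle (its arcs form a subset of the arcs of a directed 3-cycle on these vertices). -/
variable {V : Type*}

theorem stmt8 [Fintype V] [DecidableEq V] (A : V → V → Prop)
    (hA : Oriented A) (h4 : KAntiTraceable 4 A)
    (l : List V) (hP : IsAntiPath A l)
    (hlong : ∀ m : List V, IsAntiPath A m → m.length ≤ l.length)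
    (h2 : 2 ≤ l.length) (hs : l.length < Fintype.card V)
    (w : V) (hw : w ∉ l)
    (hadj : A w (l.get ⟨0, by omega⟩) ∨ A (l.get ⟨0, by omega⟩) w) :
    SubDirTriangle A (l.get ⟨0, by omega⟩) (l.get ⟨1, by omega⟩) w := by
  match l, h2, hs, hw, hadj, hP, hlong with
  | x :: y :: rest, h2, hs, hw, hadj, hP, hlong =>
    simp only [List.get] at *
    obtain ⟨hnd, b, halt⟩ := hP
    simp only [List.mem_cons, not_or] at hw
    obtain ⟨hwx, hwy, hwr⟩ := hw
    simp only [List.nodup_cons, List.mem_cons, not_or] at hnd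
    cases b with
    | true =>
      obtain ⟨hxy, htail⟩ : A x y ∧ AltPath A false (y :: rest) := by
        simpa [AltPath] using halt
      have hnxw : ¬ A x w := by
        intro hxw
        have := hlong (w :: x :: y :: rest) ⟨by
          simp only [List.nodup_cons, List.mem_cons, not_or]
          exact ⟨⟨hwx, hwy, hwr⟩, hnd⟩,
          false, by simpa [AltPath, hxw, hxy] using htail⟩
        simp at this
      have hwx' : A w x := hadj.resolve_right hnxw
      have hnwy : ¬ A w y := by
        intro hwy'
        have := hlong (x :: w :: y :: rest) ⟨by
          simp only [List.nodup_cons, List.mem_cons, not_or]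
          exact ⟨⟨fun h => hwx h.symm, hnd.1⟩, ⟨hwy, hwr⟩, hnd.2⟩,
          false, by simpa [AltPath, hwx', hwy'] using htail⟩
        simp at this
      exact Or.inl ⟨hA x y hxy, hnwy, hnxw⟩
    | false =>
      obtain ⟨hyx, htail⟩ : A y x ∧ AltPath A true (y :: rest) := by
        simpa [AltPath] using halt
      have hnwx : ¬ A w x := by
        intro hwx'
        have := hlong (w :: x :: y :: rest) ⟨by
          simp only [List.nodup_cons, List.mem_cons, not_or]
          exact ⟨⟨hwx, hwy, hwr⟩, hnd⟩,
          true, by simpa [AltPath, hwx', hyx] using htail⟩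
        simp at this
      have hxw : A x w := hadj.resolve_left hnwx
      have hnyw : ¬ A y w := by
        intro hyw
        have := hlong (x :: w :: y :: rest) ⟨by
          simp only [List.nodup_cons, List.mem_cons, not_or]
          exact ⟨⟨fun h => hwx h.symm, hnd.1⟩, ⟨hwy, hwr⟩, hnd.2⟩,
          true, by simpa [AltPath, hxw, hyw] using htail⟩
        simp at this
      exact Or.inr ⟨hA y x hyx, hnyw, hnwx⟩
end

section
/- The Paley tournament PT_7 of order 7 is 4-anti-traceable but not anti-traceable; hence f(4) ≥ 8. -/
/-! Both parts are finite checks. A hamiltonian anti-directed path of a vertex set enumerated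
by a duplicate-free list `L` is a permutation of `L`, so 4-anti-traceability of `PT_7` reduces to
the 35 four-element sublists of `[0, …, 6]` and anti-traceability to its 5040 permutations, all
of which are decided by kernel evaluation (with `List.permutations'`, which is structurally
recursive; `List.permutations` does not reduce in the kernel). -/

variable {V : Type*}

instance AltPath.instDecidable (A : V → V → Prop) [DecidableRel A] :
    ∀ (b : Bool) (l : List V), Decidable (AltPath A b l)
  | _, [] => isTrue trivial
  | _, [_] => isTrue trivial
  | b, _ :: y :: rest =>
    haveI := AltPath.instDecidable A (!b) (y :: rest)
    inferInstanceAs (Decidable (_ ∧ _))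

section Enumeration

variable [DecidableEq V] (A : V → V → Prop) {L : List V}

theorem antiTraceableOn_iff_exists_mem_permutations' (hL : L.Nodup) {S : Finset V}
    (hS : L.toFinset = S) :
    AntiTraceableOn A S ↔ ∃ l ∈ L.permutations', ∃ b, AltPath A b l := by
  simp only [List.mem_permutations']
  constructor
  · rintro ⟨l, hl, hlS, hpath⟩
    exact ⟨l, List.perm_of_nodup_nodup_toFinset_eq hl hL (hlS.trans hS.symm), hpath⟩
  · rintro ⟨l, hperm, hpath⟩
    exact ⟨l, hperm.nodup_iff.mpr hL, (List.toFinset_eq_of_perm _ _ hperm).trans hS, hpath⟩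

theorem exists_sublist_toFinset_eq {S : Finset V} (hSL : ∀ x ∈ S, x ∈ L) :
    ∃ s : List V, s.Sublist L ∧ s.toFinset = S :=
  ⟨L.filter (· ∈ S), List.filter_sublist, by ext x; simpa using hSL x⟩

variable [Fintype V]

theorem antiTraceable_iff_exists_mem_permutations' (hL : L.Nodup) (hmem : ∀ x, x ∈ L) :
    AntiTraceable A ↔ ∃ l ∈ L.permutations', ∃ b, AltPath A b l :=
  antiTraceableOn_iff_exists_mem_permutations' A hL (by ext; simp [hmem])

theorem kAntiTraceable_of_forall_sublists {k : ℕ} (hL : L.Nodup) (hmem : ∀ x, x ∈ L)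
    (hk : k ≤ L.length)
    (h : ∀ s ∈ L.sublists, s.length = k → ∃ l ∈ s.permutations', ∃ b, AltPath A b l) :
    KAntiTraceable k A := by
  have hcard : L.length = Fintype.card V := by
    rw [← List.toFinset_card_of_nodup hL, ← Finset.card_univ]
    congr
    ext; simp [hmem]
  refine ⟨hcard ▸ hk, fun S hS => ?_⟩
  obtain ⟨s, hsub, hsS⟩ := exists_sublist_toFinset_eq fun x _ => hmem x
  have hs : s.Nodup := hsub.nodup hL
  refine (antiTraceableOn_iff_exists_mem_permutations' A hs hsS).mpr
    (h s (List.mem_sublists.mpr hsub) ?_)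
  rw [← List.toFinset_card_of_nodup hs, hsS, hS]

end Enumeration

set_option maxRecDepth 10000 in
theorem stmt13 :
    KAntiTraceable 4 (fun i j : ZMod 7 => j - i = 1 ∨ j - i = 2 ∨ j - i = 4) ∧
    ¬ AntiTraceable (fun i j : ZMod 7 => j - i = 1 ∨ j - i = 2 ∨ j - i = 4) := by
  have hL : ([0, 1, 2, 3, 4, 5, 6] : List (ZMod 7)).Nodup := by decide
  have hmem : ∀ x : ZMod 7, x ∈ ([0, 1, 2, 3, 4, 5, 6] : List (ZMod 7)) := by decide
  refine ⟨kAntiTraceable_of_forall_sublists _ hL hmem (by decide) (by decide +kernel), ?_⟩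
  rw [antiTraceable_iff_exists_mem_permutations' _ hL hmem]
  decide +kernel
end

section
/- Let D be a 4-anti-traceable oriented graph and let a, b, c, d be four distinct vertices such that every arc of the induced subdigraph D[{a,b,c,d}] other than a possible arc between a and d lies in {ab, bc, ca, cd, db}. Then a and d are adjacent. -/
variable {V : Type*}

theorem stmt16 [Fintype V] [DecidableEq V] (A : V → V → Prop)
    (hA : Oriented A) (h4 : KAntiTraceable 4 A)
    (a b c d : V) (hab : a ≠ b) (hac : a ≠ c) (had : a ≠ d)
    (hbc : b ≠ c) (hbd : b ≠ d) (hcd : c ≠ d)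
    (h1 : ¬ A b a) (h2 : ¬ A c b) (h3 : ¬ A a c)
    (h4' : ¬ A d c) (h5 : ¬ A b d) :
    A a d ∨ A d a := by
  by_contra hcontra
  push_neg at hcontra
  obtain ⟨had1, had2⟩ := hcontra
  have hcard : ({a, b, c, d} : Finset V).card = 4 := by
    rw [Finset.card_insert_of_notMem (by simp [hab, hac, had]),
        Finset.card_insert_of_notMem (by simp [hbc, hbd]),
        Finset.card_insert_of_notMem (by simp [hcd]), Finset.card_singleton]
  obtain ⟨l, hnd, hfin, bb, hp⟩ := h4.2 {a, b, c, d} hcard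
  have hlen : l.length = 4 := by
    have := List.toFinset_card_of_nodup hnd
    rw [hfin, hcard] at this
    omega
  obtain ⟨w, x, y, z, rfl⟩ : ∃ w x y z, l = [w, x, y, z] := by
    rcases l with _ | ⟨w, _ | ⟨x, _ | ⟨y, _ | ⟨z, _ | ⟨u, t⟩⟩⟩⟩⟩ <;>
      simp_all <;> exact ⟨w, x, y, z, rfl, rfl, rfl, rfl⟩
  have hw : w ∈ ({a, b, c, d} : Finset V) := by rw [← hfin]; simp
  have hx : x ∈ ({a, b, c, d} : Finset V) := by rw [← hfin]; simp
  have hy : y ∈ ({a, b, c, d} : Finset V) := by rw [← hfin]; simp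
  have hz : z ∈ ({a, b, c, d} : Finset V) := by rw [← hfin]; simp
  simp only [Finset.mem_insert, Finset.mem_singleton] at hw hx hy hz
  simp only [AltPath, Bool.not_true, Bool.not_false, if_true, if_false, and_true] at hp
  simp only [List.nodup_cons, List.mem_cons, List.mem_singleton, List.not_mem_nil,
    List.nodup_nil, not_or, and_true] at hnd
  rcases bb <;> simp only [if_true, if_false, Bool.not_true, Bool.not_false] at hp <;>
    obtain ⟨p1, p2, p3⟩ := hp <;>
    rcases hw with rfl | rfl | rfl | rfl <;>
    rcases hx with rfl | rfl | rfl | rfl <;>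
    rcases hy with rfl | rfl | rfl | rfl <;>
    rcases hz with rfl | rfl | rfl | rfl <;>
    simp_all
end

section
/- Let D be a 4-anti-traceable oriented graph and let a, b, c, d be four distinct vertices such that the arcs of D[{a,b,c}] form a subset of the arcs of a directed triangle on a, b, c, and a is not adjacent to d. Then either d is a common out-neighbour of b and c, or d is a common in-neighbour of b and c. -/
variable {V : Type*}

set_option maxHeartbeats 4000000 in
theorem stmt17 [Fintype V] [DecidableEq V] (A : V → V → Prop)
    (hA : Oriented A) (h4 : KAntiTraceable 4 A)
    (a b c d : V) (hab : a ≠ b) (hac : a ≠ c) (had : a ≠ d)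
    (hbc : b ≠ c) (hbd : b ≠ d) (hcd : c ≠ d)
    (htri : SubDirTriangle A a b c)
    (hnadj : ¬ A a d ∧ ¬ A d a) :
    (A b d ∧ A c d) ∨ (A d b ∧ A d c) := by
  obtain ⟨hcard, hT⟩ := h4
  have hS4 : ({a, b, c, d} : Finset V).card = 4 := by
    rw [Finset.card_insert_of_notMem (by simp [hab, hac, had]),
        Finset.card_insert_of_notMem (by simp [hbc, hbd]),
        Finset.card_insert_of_notMem (by simp [hcd]), Finset.card_singleton]
  obtain ⟨l, hnd, hS, bb, hp⟩ := hT {a, b, c, d} hS4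
  have hlen : l.length = 4 := by
    rw [← List.toFinset_card_of_nodup hnd, hS, hS4]
  match l, hlen, hnd, hS, hp with
  | [x, y, z, w], _, hnd, hS, hp =>
  have hx : x = a ∨ x = b ∨ x = c ∨ x = d := by
    have : x ∈ ({a,b,c,d} : Finset V) := hS ▸ (by simp)
    simpa using this
  have hy : y = a ∨ y = b ∨ y = c ∨ y = d := by
    have : y ∈ ({a,b,c,d} : Finset V) := hS ▸ (by simp)
    simpa using this
  have hz : z = a ∨ z = b ∨ z = c ∨ z = d := by
    have : z ∈ ({a,b,c,d} : Finset V) := hS ▸ (by simp)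
    simpa using this
  have hw : w = a ∨ w = b ∨ w = c ∨ w = d := by
    have : w ∈ ({a,b,c,d} : Finset V) := hS ▸ (by simp)
    simpa using this
  obtain ⟨hxy, hxz, hxw, hyz, hyw, hzw⟩ :
      x ≠ y ∧ x ≠ z ∧ x ≠ w ∧ y ≠ z ∧ y ≠ w ∧ z ≠ w := by
    simp only [List.nodup_cons, List.mem_cons, List.not_mem_nil, or_false, not_or,
      List.nodup_nil, and_true] at hnd
    tauto
  clear hS hT hcard hS4 hnd hA
  obtain ⟨hn1, hn2⟩ := hnadj
  rcases htri with ⟨ht1, ht2, ht3⟩ | ⟨ht1, ht2, ht3⟩ <;>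
  rcases bb <;>
    simp only [AltPath, Bool.not_true, Bool.not_false, Bool.false_eq_true, if_true, if_false, and_true] at hp <;>
    obtain ⟨h1, h2, h3⟩ := hp <;>
    rcases hx with rfl | rfl | rfl | rfl <;>
    rcases hy with rfl | rfl | rfl | rfl <;>
    (try exact absurd rfl hxy) <;>
    rcases hz with rfl | rfl | rfl | rfl <;>
    (try exact absurd rfl hxz) <;> (try exact absurd rfl hyz) <;>
    rcases hw with rfl | rfl | rfl | rfl <;>
    (try exact absurd rfl hxw) <;> (try exact absurd rfl hyw) <;> (try exact absurd rfl hzw) <;>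
    tauto
end

section
/- Let D be a 4-anti-traceable oriented graph and let a, b, c, d be four distinct vertices such that the arcs of D[{a,b,c,d}] not between {a,c} or between {b,d} form a subdigraph of a directed 4-cycle a → b → c → d → a. Then a is adjacent to c and b is adjacent to d. -/
variable {V : Type*}

set_option maxHeartbeats 4000000 in
theorem stmt18 [Fintype V] [DecidableEq V] (A : V → V → Prop)
    (hA : Oriented A) (h4 : KAntiTraceable 4 A)
    (a b c d : V) (hab : a ≠ b) (hac : a ≠ c) (had : a ≠ d)
    (hbc : b ≠ c) (hbd : b ≠ d) (hcd : c ≠ d)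
    (h1 : ¬ A b a) (h2 : ¬ A c b) (h3 : ¬ A d c) (h4' : ¬ A a d) :
    (A a c ∨ A c a) ∧ (A b d ∨ A d b) := by
  obtain ⟨-, hS⟩ := h4
  have hcard : ({a, b, c, d} : Finset V).card = 4 := by
    rw [Finset.card_insert_of_notMem (by simp [hab, hac, had]),
        Finset.card_insert_of_notMem (by simp [hbc, hbd]),
        Finset.card_insert_of_notMem (by simp [hcd]), Finset.card_singleton]
  obtain ⟨l, hnd, hfin, bb, hp⟩ := hS {a, b, c, d} hcard
  have hlen : l.length = 4 := by
    rw [← List.toFinset_card_of_nodup hnd, hfin, hcard]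
  obtain ⟨p, q, r, s, rfl⟩ : ∃ p q r s, l = [p, q, r, s] := by
    match l, hlen with
    | [p, q, r, s], _ => exact ⟨p, q, r, s, rfl⟩
  have hpm : p ∈ ({a, b, c, d} : Finset V) := hfin ▸ (by simp)
  have hqm : q ∈ ({a, b, c, d} : Finset V) := hfin ▸ (by simp)
  have hrm : r ∈ ({a, b, c, d} : Finset V) := hfin ▸ (by simp)
  have hsm : s ∈ ({a, b, c, d} : Finset V) := hfin ▸ (by simp)
  simp only [Finset.mem_insert, Finset.mem_singleton] at hpm hqm hrm hsm
  simp only [List.nodup_cons, List.mem_cons, List.not_mem_nil, List.mem_singleton,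
    or_false, not_or, List.nodup_nil, and_true] at hnd
  obtain ⟨⟨hpq, hpr, hps⟩, ⟨hqr, hqs⟩, hrs⟩ := hnd
  cases bb <;>
    simp only [AltPath, Bool.not_true, Bool.not_false, if_true, if_false, and_true] at hp <;>
    obtain ⟨hx, hy, hz⟩ := hp <;>
    rcases hpm with rfl | rfl | rfl | rfl <;>
    rcases hqm with rfl | rfl | rfl | rfl <;>
    rcases hrm with rfl | rfl | rfl | rfl <;>
    rcases hsm with rfl | rfl | rfl | rfl <;>
    tauto
end
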